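/- arXiv:1807.00691 — 2 statements merged into one kernel-verified Lean document; each statement's English description precedes it below -/
import Mathlib

section
/- The minimum ribbonlength among 3-stick folded ribbon unknots whose three folds all have the same type is 3√3, attained exactly when the triangular knot diagram is equilateral. -/
/-!
With `x = s - a`, `y = s - b`, `z = s - c` (positive by the triangle inequality, with
`x + y + z = s`), Heron's formula `A² = s x y z` and `r = A / s` give
`(P / (2r))² = s⁴ / A² = (x + y + z)³ / (x y z)`. By AM-GM this is at least `27`, with equality
iff `x = y = z`, i.e. iff the triangle is equilateral; and `√27 = 3√3`.
-/

open Real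

theorem add_pow_three_sub_twentySeven_mul (x y z : ℝ) :
    (x + y + z) ^ 3 - 27 * (x * y * z) =
      (x + y + z) * ((x - y) ^ 2 + (y - z) ^ 2 + (z - x) ^ 2) / 2 +
        3 * (x * (y - z) ^ 2 + y * (z - x) ^ 2 + z * (x - y) ^ 2) := by
  ring

theorem twentySeven_mul_le_add_pow_three {x y z : ℝ} (hx : 0 ≤ x) (hy : 0 ≤ y) (hz : 0 ≤ z) :
    27 * (x * y * z) ≤ (x + y + z) ^ 3 := by
  have := add_pow_three_sub_twentySeven_mul x y z
  have : 0 ≤ (x + y + z) * ((x - y) ^ 2 + (y - z) ^ 2 + (z - x) ^ 2) / 2 +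
      3 * (x * (y - z) ^ 2 + y * (z - x) ^ 2 + z * (x - y) ^ 2) := by positivity
  linarith

theorem add_pow_three_eq_twentySeven_mul_iff {x y z : ℝ} (hx : 0 < x) (hy : 0 < y)
    (hz : 0 < z) : (x + y + z) ^ 3 = 27 * (x * y * z) ↔ x = y ∧ y = z := by
  refine ⟨fun h => ?_, by rintro ⟨rfl, rfl⟩; ring⟩
  have hsq : (x + y + z) * ((x - y) ^ 2 + (y - z) ^ 2 + (z - x) ^ 2) = 0 := by
    have := add_pow_three_sub_twentySeven_mul x y z
    have : 0 ≤ (x + y + z) * ((x - y) ^ 2 + (y - z) ^ 2 + (z - x) ^ 2) := by positivity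
    have : 0 ≤ x * (y - z) ^ 2 + y * (z - x) ^ 2 + z * (x - y) ^ 2 := by positivity
    linarith
  have hS := (mul_eq_zero.mp hsq).resolve_left (by positivity)
  constructor <;> nlinarith [sq_nonneg (x - y), sq_nonneg (y - z), sq_nonneg (z - x)]

theorem three_mul_sqrt_three_eq_sqrt_twentySeven : 3 * √3 = √27 := by
  rw [show (27 : ℝ) = 3 ^ 2 * 3 by norm_num, sqrt_mul (by positivity), sqrt_sq (by norm_num)]

theorem perimeter_div_two_inradius_sq {a b c s A r : ℝ} (hs : s = (a + b + c) / 2)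
    (hA : A = √(s * (s - a) * (s - b) * (s - c))) (hr : r = A / s) (hs0 : 0 < s)
    (hxyz : 0 < (s - a) * (s - b) * (s - c)) :
    ((a + b + c) / (2 * r)) ^ 2 = s ^ 3 / ((s - a) * (s - b) * (s - c)) := by
  have hA2 : A ^ 2 = s * ((s - a) * (s - b) * (s - c)) := by
    rw [hA, sq_sqrt (by linarith [mul_pos hs0 hxyz])]; ring
  rw [hr, show a + b + c = 2 * s by linarith, div_pow, mul_pow, mul_pow, div_pow, hA2]
  field_simp

theorem three_stick_unknot_min_ribbonlength_general (a b c : ℝ)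
    (hab : a < b + c) (hbc : b < a + c) (hca : c < a + b)
    (s A r : ℝ) (hs : s = (a + b + c) / 2)
    (hA : A = Real.sqrt (s * (s - a) * (s - b) * (s - c)))
    (hr : r = A / s) :
    3 * Real.sqrt 3 ≤ (a + b + c) / (2 * r) ∧
      ((a + b + c) / (2 * r) = 3 * Real.sqrt 3 ↔ a = b ∧ b = c) := by
  have hx : 0 < s - a := by linarith
  have hy : 0 < s - b := by linarith
  have hz : 0 < s - c := by linarith
  have hsum : (s - a) + (s - b) + (s - c) = s := by linarith
  have hs0 : 0 < s := by linarith
  have hxyz : 0 < (s - a) * (s - b) * (s - c) := by positivity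
  have hρ : 0 ≤ (a + b + c) / (2 * r) :=
    div_nonneg (by linarith) (by rw [hr, hA]; positivity)
  have amgm := twentySeven_mul_le_add_pow_three hx.le hy.le hz.le
  have amgm_eq := add_pow_three_eq_twentySeven_mul_iff hx hy hz
  rw [hsum] at amgm amgm_eq
  rw [three_mul_sqrt_three_eq_sqrt_twentySeven, sqrt_le_left hρ, eq_comm,
    sqrt_eq_iff_eq_sq (by norm_num) hρ, perimeter_div_two_inradius_sq hs hA hr hs0 hxyz,
    le_div_iff₀ hxyz, eq_div_iff hxyz.ne', eq_comm, amgm_eq]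
  exact ⟨amgm, by constructor <;> rintro ⟨h₁, h₂⟩ <;> constructor <;> linarith⟩

/-- For a 3-stick folded ribbon unknot with all three folds of the same type, the maximal
allowed width is twice the inradius `r` of the triangular diagram, so the ribbonlength is
`P/(2r)` where `P` is the perimeter.  For every triangle (side lengths `a b c`), with
`s` the semiperimeter, `A` the Heron area and `r = A/s` the inradius, one has
`P/(2r) ≥ 3√3`, with equality iff the triangle is equilateral. -/
theorem three_stick_unknot_min_ribbonlength (a b c : ℝ)
    (ha : 0 < a) (hb : 0 < b) (hc : 0 < c)
    (hab : a < b + c) (hbc : b < a + c) (hca : c < a + b)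
    (s A r : ℝ) (hs : s = (a + b + c) / 2)
    (hA : A = Real.sqrt (s * (s - a) * (s - b) * (s - c)))
    (hr : r = A / s) :
    3 * Real.sqrt 3 ≤ (a + b + c) / (2 * r) ∧
      ((a + b + c) / (2 * r) = 3 * Real.sqrt 3 ↔ a = b ∧ b = c) :=
  three_stick_unknot_min_ribbonlength_general a b c hab hbc hca s A r hs hA hr
end

section
/- For every triangle, the ratio of its perimeter to its inradius is at least 6√3, with equality if and only if the triangle is equilateral. -/
/-!
Write `x = s - a`, `y = s - b`, `z = s - c`; the triangle inequalities make these positive, and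
`x + y + z = s`, so Heron's formula reads `A² = s x y z`. AM-GM for `x, y, z` gives
`27 x y z ≤ s³`, i.e. `27 A² ≤ s⁴`, i.e. `3√3 A ≤ s²`, with equality iff `x = y = z`.
Finally `(a + b + c) / r = 2 s² / A`.
-/

section

variable {x y z : ℝ}

theorem mul_mul_le_add_add_pow_three (hx : 0 ≤ x) (hy : 0 ≤ y) (hz : 0 ≤ z) :
    27 * (x * y * z) ≤ (x + y + z) ^ 3 := by
  nlinarith [sq_nonneg (x - y), sq_nonneg (y - z), sq_nonneg (x - z),
    mul_nonneg hx hy, mul_nonneg hy hz, mul_nonneg hx hz]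

theorem mul_mul_eq_add_add_pow_three_iff (hx : 0 < x) (hy : 0 < y) (hz : 0 < z) :
    27 * (x * y * z) = (x + y + z) ^ 3 ↔ x = y ∧ y = z := by
  refine ⟨fun h => ?_, fun ⟨rfl, rfl⟩ => by ring⟩
  have hxy : (x - y) ^ 2 = 0 := by
    nlinarith [sq_nonneg (x - y), sq_nonneg (y - z), sq_nonneg (x - z),
      mul_pos hx hy, mul_pos hy hz, mul_pos hx hz]
  have hyz : (y - z) ^ 2 = 0 := by
    nlinarith [sq_nonneg (x - y), sq_nonneg (y - z), sq_nonneg (x - z),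
      mul_pos hx hy, mul_pos hy hz, mul_pos hx hz]
  exact ⟨sub_eq_zero.mp (pow_eq_zero_iff two_ne_zero |>.mp hxy),
    sub_eq_zero.mp (pow_eq_zero_iff two_ne_zero |>.mp hyz)⟩

theorem sq_three_mul_sqrt_three_mul_sqrt {P : ℝ} (hP : 0 ≤ P) :
    (3 * √3 * √P) ^ 2 = 27 * P := by
  rw [mul_pow, mul_pow, Real.sq_sqrt (by norm_num), Real.sq_sqrt hP]
  ring

theorem three_mul_sqrt_three_mul_sqrt_heron_le (hx : 0 ≤ x) (hy : 0 ≤ y) (hz : 0 ≤ z) :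
    3 * √3 * √((x + y + z) * x * y * z) ≤ (x + y + z) ^ 2 := by
  have hP : 0 ≤ (x + y + z) * x * y * z := by positivity
  rw [← pow_le_pow_iff_left₀ (by positivity) (by positivity) two_ne_zero,
    sq_three_mul_sqrt_three_mul_sqrt hP]
  have := mul_le_mul_of_nonneg_left (mul_mul_le_add_add_pow_three hx hy hz)
    (by positivity : 0 ≤ x + y + z)
  linear_combination this

theorem three_mul_sqrt_three_mul_sqrt_heron_eq_iff (hx : 0 < x) (hy : 0 < y) (hz : 0 < z) :
    3 * √3 * √((x + y + z) * x * y * z) = (x + y + z) ^ 2 ↔ x = y ∧ y = z := by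
  have hs : 0 < x + y + z := by positivity
  rw [← sq_eq_sq₀ (by positivity) (by positivity), sq_three_mul_sqrt_three_mul_sqrt (by positivity),
    ← mul_mul_eq_add_add_pow_three_iff hx hy hz]
  constructor <;> intro h
  · exact mul_left_cancel₀ hs.ne' (by linear_combination h)
  · linear_combination (x + y + z) * h

end

theorem perimeter_div_inradius_ge_general (a b c : ℝ)
    (hab : a < b + c) (hbc : b < a + c) (hca : c < a + b)
    (s A r : ℝ) (hs : s = (a + b + c) / 2)
    (hA : A = Real.sqrt (s * (s - a) * (s - b) * (s - c)))
    (hr : r = A / s) :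
    6 * Real.sqrt 3 ≤ (a + b + c) / r ∧
      ((a + b + c) / r = 6 * Real.sqrt 3 ↔ a = b ∧ b = c) := by
  have hx : 0 < s - a := by rw [hs]; linarith
  have hy : 0 < s - b := by rw [hs]; linarith
  have hz : 0 < s - c := by rw [hs]; linarith
  have hs0 : 0 < s := by rw [hs]; linarith
  have hravi : s = (s - a) + (s - b) + (s - c) := by rw [hs]; ring
  have hA0 : 0 < A := by rw [hA]; apply Real.sqrt_pos.mpr; positivity
  have hratio : (a + b + c) / r = 2 * s ^ 2 / A := by
    rw [hr, hs]; field_simp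
  have hineq := three_mul_sqrt_three_mul_sqrt_heron_le hx.le hy.le hz.le
  have heq := three_mul_sqrt_three_mul_sqrt_heron_eq_iff hx hy hz
  rw [← hravi, ← hA] at hineq heq
  rw [hratio, le_div_iff₀ hA0, div_eq_iff hA0.ne']
  refine ⟨by linarith, ?_⟩
  rw [show a = b ∧ b = c ↔ s - a = s - b ∧ s - b = s - c by
    constructor <;> rintro ⟨h₁, h₂⟩ <;> constructor <;> linarith, ← heq]
  constructor <;> intro h <;> linarith

/-- For every triangle (side lengths `a b c`, semiperimeter `s`, Heron area `A`, inradius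
`r = A/s`), the ratio of perimeter to inradius is at least `6√3`, with equality iff the
triangle is equilateral. -/
theorem perimeter_div_inradius_ge (a b c : ℝ)
    (ha : 0 < a) (hb : 0 < b) (hc : 0 < c)
    (hab : a < b + c) (hbc : b < a + c) (hca : c < a + b)
    (s A r : ℝ) (hs : s = (a + b + c) / 2)
    (hA : A = Real.sqrt (s * (s - a) * (s - b) * (s - c)))
    (hr : r = A / s) :
    6 * Real.sqrt 3 ≤ (a + b + c) / r ∧
      ((a + b + c) / r = 6 * Real.sqrt 3 ↔ a = b ∧ b = c) :=
  perimeter_div_inradius_ge_general a b c hab hbc hca s A r hs hA hr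
end
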